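/- arXiv:2001.09370 — 7 statements merged into one kernel-verified Lean document; each statement's English description precedes it below -/
import Mathlib

section
/- Let $\gamma > 1$ and $\lambda > 4$ be reals, and let $K \ge 1$ be an integer. Setting $N_k = \gamma^{-k}$ and $D_k = \lambda^{-k}$ (with $D_0 = 1$), one has $$\gamma^{-1}\log\frac{1+\lambda^{-1}}{2\lambda^{-1}} + \sum_{k=2}^{K} \gamma^{-k} \log\frac{(1+\lambda^{-k})(\lambda^{-k}+\lambda^{-(k-1)})}{2(1+\lambda^{-(k-1)})\,\lambda^{-k}} \;\ge\; \frac{\log(\lambda/4)}{\gamma - 1}\bigl(1 - \gamma^{-K}\bigr).$$ In particular, the supremum over all $K \ge 1$ of the left-hand side is at least $\frac{\log(\lambda/4)}{\gamma - 1}$. -/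
private lemma geom_inv_sum (gam : ℝ) (hgam : 1 < gam) :
    ∀ K : ℕ, ∑ k ∈ Finset.Icc 1 K, (gam ^ k)⁻¹ = (1 - (gam ^ K)⁻¹) / (gam - 1) := by
  have hg0 : (0:ℝ) < gam := lt_trans one_pos hgam
  have hgne : gam ≠ 0 := ne_of_gt hg0
  have hg1 : gam - 1 ≠ 0 := by linarith
  intro K
  induction K with
  | zero => simp
  | succ n ih =>
      rw [Finset.sum_Icc_succ_top (by omega), ih]
      have hpn : (gam ^ n) ≠ 0 := pow_ne_zero _ hgne
      field_simp
      ring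

/-- For `γ > 1`, `λ > 4`, with `N k = γ⁻ᵏ` and `D k = λ⁻ᵏ` (`D 0 = 1`),
the converse expression for depth `K` is at least
`(log (λ/4) / (γ - 1)) · (1 - γ⁻ᴷ)`; in particular its supremum over `K ≥ 1`
is at least `log (λ/4) / (γ - 1)`. -/
theorem staircase_geometric_lower_bound
    (gam lam : ℝ) (hgam : 1 < gam) (hlam : 4 < lam)
    (L : ℕ → ℝ)
    (hL : ∀ K : ℕ, L K =
      gam⁻¹ * Real.log ((1 + lam⁻¹) / (2 * lam⁻¹)) +
      ∑ k ∈ Finset.Icc 2 K, (gam ^ k)⁻¹ *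
        Real.log ((1 + (lam ^ k)⁻¹) * ((lam ^ k)⁻¹ + (lam ^ (k - 1))⁻¹) /
          (2 * (1 + (lam ^ (k - 1))⁻¹) * (lam ^ k)⁻¹))) :
    (∀ K : ℕ, 1 ≤ K →
      L K ≥ Real.log (lam / 4) / (gam - 1) * (1 - (gam ^ K)⁻¹)) ∧
    (∀ ε : ℝ, 0 < ε → ∃ K : ℕ, 1 ≤ K ∧
      L K > Real.log (lam / 4) / (gam - 1) - ε) := by
  have hg0 : (0:ℝ) < gam := lt_trans one_pos hgam
  have hl0 : (0:ℝ) < lam := by linarith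
  have hlog0 : 0 ≤ Real.log (lam / 4) := Real.log_nonneg ((one_le_div (by norm_num)).mpr (by linarith))
  set C : ℝ := Real.log (lam / 4) / (gam - 1) with hCdef
  have hC0 : 0 ≤ C := div_nonneg hlog0 (by linarith)
  -- each summand term is at least log(lam/4)
  have hterm1 : Real.log (lam / 4) ≤ Real.log ((1 + lam⁻¹) / (2 * lam⁻¹)) := by
    apply Real.log_le_log (by positivity)
    rw [div_le_div_iff₀ (by norm_num) (by positivity)]
    have hli : lam * lam⁻¹ = 1 := mul_inv_cancel₀ (ne_of_gt hl0)
    nlinarith [inv_pos.mpr hl0]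
  have htermk : ∀ k ∈ Finset.Icc 2 (0 + 1), True := fun _ _ => trivial
  have hterm : ∀ k : ℕ, 2 ≤ k → Real.log (lam / 4) ≤
      Real.log ((1 + (lam ^ k)⁻¹) * ((lam ^ k)⁻¹ + (lam ^ (k - 1))⁻¹) /
        (2 * (1 + (lam ^ (k - 1))⁻¹) * (lam ^ k)⁻¹)) := by
    intro k hk
    set p : ℝ := lam ^ (k - 1) with hp
    have hp0 : 0 < p := pow_pos hl0 _
    have hpk : lam ^ k = p * lam := by
      rw [hp, ← pow_succ]
      congr 1
      omega
    have hpl : lam ≤ p := by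
      rw [hp]
      calc lam = lam ^ 1 := (pow_one lam).symm
      _ ≤ lam ^ (k - 1) := pow_le_pow_right₀ (by linarith) (by omega)
    apply Real.log_le_log (by positivity)
    rw [hpk, div_le_div_iff₀ (by norm_num) (by positivity)]
    have h1 : (0:ℝ) < p * lam := by positivity
    have h2 : ((p*lam) * (p*lam)⁻¹) = 1 := mul_inv_cancel₀ (ne_of_gt h1)
    have h3 : p * p⁻¹ = 1 := mul_inv_cancel₀ (ne_of_gt hp0)
    have hx0 : 0 < (p*lam)⁻¹ := inv_pos.mpr h1
    have hy0 : 0 < p⁻¹ := inv_pos.mpr hp0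
    have hyle : p⁻¹ ≤ lam⁻¹ := by
      apply inv_anti₀ hl0 hpl
    have hlam_inv : lam * lam⁻¹ = 1 := mul_inv_cancel₀ (ne_of_gt hl0)
    -- goal: lam * (2 * (1 + p⁻¹) * (p*lam)⁻¹) ≤ (1 + (p*lam)⁻¹) * ((p*lam)⁻¹ + p⁻¹) * 4
    nlinarith [mul_pos hx0 hy0, sq_nonneg ((p*lam)⁻¹), mul_le_mul_of_nonneg_left hyle (le_of_lt hl0)]
  -- geometric split
  have key : ∀ K : ℕ, 1 ≤ K → L K ≥ C * (1 - (gam ^ K)⁻¹) := by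
    intro K hK
    have hsplit : Finset.Icc 1 K = insert 1 (Finset.Icc 2 K) := by
      ext x
      simp only [Finset.mem_insert, Finset.mem_Icc]
      omega
    have hsum : ∑ k ∈ Finset.Icc 1 K, (gam ^ k)⁻¹ * Real.log (lam / 4)
        = gam⁻¹ * Real.log (lam / 4)
          + ∑ k ∈ Finset.Icc 2 K, (gam ^ k)⁻¹ * Real.log (lam / 4) := by
      rw [hsplit, Finset.sum_insert (by simp), pow_one]
    have hLB : L K ≥ ∑ k ∈ Finset.Icc 1 K, (gam ^ k)⁻¹ * Real.log (lam / 4) := by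
      rw [hL K, hsum]
      refine add_le_add (mul_le_mul_of_nonneg_left hterm1 (by positivity)) ?_
      refine Finset.sum_le_sum fun k hk => ?_
      exact mul_le_mul_of_nonneg_left (hterm k (Finset.mem_Icc.mp hk).1) (by positivity)
    have hgeom : ∑ k ∈ Finset.Icc 1 K, (gam ^ k)⁻¹ * Real.log (lam / 4)
        = C * (1 - (gam ^ K)⁻¹) := by
      rw [← Finset.sum_mul, geom_inv_sum gam hgam K, hCdef]
      ring
    linarith [hLB, hgeom ▸ hLB]
  refine ⟨key, ?_⟩
  intro ε hε
  have hinv1 : gam⁻¹ < 1 := inv_lt_one_of_one_lt₀ hgam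
  have hinv0 : 0 ≤ gam⁻¹ := by positivity
  obtain ⟨n, hn⟩ := exists_pow_lt_of_lt_one (show 0 < ε / (C + 1) by positivity) hinv1
  refine ⟨max n 1, le_max_right n 1, ?_⟩
  have hle : (gam ^ (max n 1))⁻¹ ≤ (gam⁻¹) ^ n := by
    rw [← inv_pow]
    exact pow_le_pow_of_le_one hinv0 (le_of_lt hinv1) (le_max_left n 1)
  have hCk : C * (gam ^ (max n 1))⁻¹ < ε := by
    have h1 : C * (gam ^ (max n 1))⁻¹ ≤ (C + 1) * (gam⁻¹) ^ n := by
      have : 0 ≤ (gam ^ (max n 1))⁻¹ := by positivity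
      nlinarith [pow_nonneg hinv0 n]
    have h2 : (C + 1) * (gam⁻¹) ^ n < (C + 1) * (ε / (C + 1)) :=
      mul_lt_mul_of_pos_left hn (by linarith)
    have h3 : (C + 1) * (ε / (C + 1)) = ε := by
      field_simp
    linarith
  have := key (max n 1) (le_max_right n 1)
  have hW : 0 ≤ (gam ^ (max n 1))⁻¹ := by positivity
  nlinarith
end

section
/- Let $K \ge 1$ be an integer, let $N_1 > N_2 > \dots > N_K > 0$ be reals, set $Q_k = 1/N_k$ for $1 \le k \le K$, let $E_0 \ge 0$, and fix $\beta_0 = 1$. Define, for $\beta = (\beta_1,\dots,\beta_K)$ with all $\beta_k > 0$, $$E_D(\beta) = \sum_{k=1}^{K} N_k \log\frac{E_0 Q_k + \beta_k}{E_0 Q_k + \beta_{k-1}}.$$ Then $E_D$ is strictly increasing in each coordinate: if $\beta$ and $\beta'$ are two points of the open positive orthant with $\beta_j < \beta'_j$ for some index $j$ and $\beta_i = \beta'_i$ for all $i \ne j$, then $E_D(\beta) < E_D(\beta')$. -/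
/-- The digital energy
`E_D(β) = ∑_{k=1}^K N k · log ((E₀ Q k + β k)/(E₀ Q k + β (k-1)))`
(with `Q k = 1/N k` and `β 0 = 1` fixed) is strictly increasing in each
coordinate `β 1, …, β K` on the open positive orthant. -/
theorem ED_strictly_increasing
    (K : ℕ) (hK : 1 ≤ K) (N : ℕ → ℝ)
    (hNmono : ∀ k, 1 ≤ k → k < K → N (k + 1) < N k)
    (hNK : 0 < N K)
    (E0 : ℝ) (hE0 : 0 ≤ E0)
    (ED : (ℕ → ℝ) → ℝ)
    (hED : ∀ β : ℕ → ℝ, ED β = ∑ k ∈ Finset.Icc 1 K,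
      N k * Real.log ((E0 * (1 / N k) + β k) /
        (E0 * (1 / N k) + (if k = 1 then 1 else β (k - 1)))))
    (β β' : ℕ → ℝ)
    (hβpos : ∀ k, 1 ≤ k → k ≤ K → 0 < β k)
    (hβ'pos : ∀ k, 1 ≤ k → k ≤ K → 0 < β' k)
    (j : ℕ) (hj1 : 1 ≤ j) (hjK : j ≤ K)
    (hlt : β j < β' j)
    (heq : ∀ i, i ≠ j → β i = β' i) :
    ED β < ED β' := by
  -- N is antitone on [1, K]
  have hNanti : ∀ a b : ℕ, 1 ≤ a → a ≤ b → b ≤ K → N b ≤ N a := by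
    intro a b ha hab hbK
    induction b, hab using Nat.le_induction with
    | base => exact le_rfl
    | succ n hn ih =>
      have h1 : n < K := Nat.lt_of_succ_le hbK
      exact le_trans (hNmono n (le_trans ha hn) h1).le (ih h1.le)
  have hNpos : ∀ k, 1 ≤ k → k ≤ K → 0 < N k := fun k h1 h2 =>
    lt_of_lt_of_le hNK (hNanti k K h1 h2 le_rfl)
  set g : (ℕ → ℝ) → ℕ → ℝ := fun b k =>
    N k * Real.log ((E0 * (1 / N k) + b k) /
      (E0 * (1 / N k) + (if k = 1 then 1 else b (k - 1)))) with hg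
  have hsub : ED β' - ED β = ∑ k ∈ Finset.Icc 1 K, (g β' k - g β k) := by
    rw [hED β, hED β', ← Finset.sum_sub_distrib]
  have hzero : ∀ k, k ≠ j → k ≠ j + 1 → g β' k - g β k = 0 := by
    intro k hkj hkj1
    have h1 : β' k = β k := (heq k hkj).symm
    have h2 : (if k = 1 then (1:ℝ) else β' (k-1)) = (if k = 1 then 1 else β (k-1)) := by
      by_cases h : k = 1
      · simp [h]
      · have hne : k - 1 ≠ j := by omega
        simp [h, (heq _ hne).symm]
    simp [hg, h1, h2]
  -- positivity facts at index j
  have hNj : 0 < N j := hNpos j hj1 hjK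
  set A : ℝ := E0 * (1 / N j) with hA
  have hA0 : 0 ≤ A := mul_nonneg hE0 (by positivity)
  have hβj : 0 < β j := hβpos j hj1 hjK
  have hβ'j : 0 < β' j := hβ'pos j hj1 hjK
  set c : ℝ := if j = 1 then (1:ℝ) else β (j-1) with hc
  have hc0 : 0 < c := by
    rw [hc]; split
    · norm_num
    · exact hβpos (j-1) (by omega) (by omega)
  have hgj' : g β' j = N j * Real.log ((A + β' j) / (A + c)) := by
    have h2 : (if j = 1 then (1:ℝ) else β' (j-1)) = c := by
      rw [hc]
      by_cases h : j = 1
      · simp [h]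
      · have hne : j - 1 ≠ j := by omega
        simp [h, (heq _ hne).symm]
    simp [hg, h2, hA]
  have hgj : g β j = N j * Real.log ((A + β j) / (A + c)) := by simp [hg, hc, hA]
  have hDj : g β' j - g β j = N j * (Real.log (A + β' j) - Real.log (A + β j)) := by
    rw [hgj', hgj,
      Real.log_div (by positivity) (by positivity),
      Real.log_div (by positivity) (by positivity)]
    ring
  have hL1 : 0 < Real.log (A + β' j) - Real.log (A + β j) := by
    have := Real.log_lt_log (show (0:ℝ) < A + β j by positivity)
      (show A + β j < A + β' j by linarith)
    linarith
  by_cases hcase : j = K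
  · -- only the j-th term changes
    have hsum : ∑ k ∈ Finset.Icc 1 K, (g β' k - g β k) = g β' j - g β j := by
      refine Finset.sum_eq_single_of_mem j (Finset.mem_Icc.2 ⟨hj1, hjK⟩) ?_
      intro k hk hkj
      have hkK := (Finset.mem_Icc.1 hk).2
      exact hzero k hkj (by omega)
    have : 0 < ED β' - ED β := by
      rw [hsub, hsum, hDj]; positivity
    linarith
  · -- terms j and j+1 change
    have hjK' : j + 1 ≤ K := by omega
    have hNj1 : 0 < N (j+1) := hNpos (j+1) (by omega) hjK'
    have hNlt : N (j+1) < N j := hNmono j hj1 (by omega)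
    set A' : ℝ := E0 * (1 / N (j+1)) with hA'
    have hA'0 : 0 ≤ A' := mul_nonneg hE0 (by positivity)
    have hAA' : A ≤ A' := by
      have h1 : 1 / N j ≤ 1 / N (j+1) := one_div_le_one_div_of_le hNj1 hNlt.le
      exact mul_le_mul_of_nonneg_left h1 hE0
    have hβj1 : 0 < β (j+1) := hβpos (j+1) (by omega) hjK'
    have hnum : β' (j+1) = β (j+1) := (heq (j+1) (by omega)).symm
    have hDj1 : g β' (j+1) - g β (j+1) =
        N (j+1) * (Real.log (A' + β j) - Real.log (A' + β' j)) := by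
      have hne1 : j + 1 ≠ 1 := by omega
      have hsimp : j + 1 - 1 = j := by omega
      rw [hg]
      simp only [hne1, if_false, hsimp, hnum, ← hA']
      rw [Real.log_div (by positivity) (by positivity),
        Real.log_div (by positivity) (by positivity)]
      ring
    have hsum : ∑ k ∈ Finset.Icc 1 K, (g β' k - g β k)
        = (g β' j - g β j) + (g β' (j+1) - g β (j+1)) := by
      have hsubset : ({j, j+1} : Finset ℕ) ⊆ Finset.Icc 1 K := by
        intro x hx
        simp only [Finset.mem_insert, Finset.mem_singleton] at hx
        rcases hx with rfl | rfl <;> exact Finset.mem_Icc.2 ⟨by omega, by omega⟩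
      rw [← Finset.sum_subset hsubset (fun x _ hx => by
        simp only [Finset.mem_insert, Finset.mem_singleton, not_or] at hx
        exact hzero x hx.1 hx.2)]
      rw [Finset.sum_pair (by omega : j ≠ j + 1)]
    -- key comparison: L2 ≤ L1
    have hL12 : Real.log (A' + β' j) - Real.log (A' + β j) ≤
        Real.log (A + β' j) - Real.log (A + β j) := by
      have hmul : (A' + β' j) * (A + β j) ≤ (A + β' j) * (A' + β j) := by
        nlinarith [mul_nonneg (sub_nonneg.2 hAA') (le_of_lt (sub_pos.2 hlt))]
      have := Real.log_le_log (by positivity) hmul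
      rw [Real.log_mul (by positivity) (by positivity),
        Real.log_mul (by positivity) (by positivity)] at this
      linarith
    have : 0 < ED β' - ED β := by
      rw [hsub, hsum, hDj, hDj1]
      nlinarith [mul_pos (sub_pos.2 hNlt) hL1,
        mul_nonneg hNj1.le (sub_nonneg.2 hL12)]
    linarith
end

section
/- Let $K \ge 1$ be an integer, let $N_1 > N_2 > \dots > N_K > 0$ be reals, set $Q_k = 1/N_k$ for $1 \le k \le K$, let $E_0 \ge 0$, and fix $\beta_0 = 1$. Define, for $\beta = (\beta_1,\dots,\beta_K)$ with all $\beta_k > 0$, $$E_D(\beta) = \sum_{k=1}^{K} N_k \log\frac{E_0 Q_k + \beta_k}{E_0 Q_k + \beta_{k-1}}.$$ Then $E_D$ is a concave function of $\beta$ on the open positive orthant $\{\beta \in \mathbb{R}^K : \beta_k > 0 \text{ for all } k\}$. -/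
/-!
Expanding the logarithm of each quotient and collecting the terms that contain the same `β k`
writes `E_D(β)` as the constant `-N₁ log (E₀Q₁ + 1)` plus `∑ₖ gₖ (β k)`, where
`gₖ x = Nₖ log (E₀Qₖ + x) - Nₖ₊₁ log (E₀Qₖ₊₁ + x)` for `k < K` and `g_K x = N_K log (E₀Q_K + x)`.
Each `gₖ` is concave: `gₖ'' = -Nₖ / (E₀Qₖ + x)² + Nₖ₊₁ / (E₀Qₖ₊₁ + x)² ≤ 0`, because
`Nₖ₊₁ ≤ Nₖ` and `E₀Qₖ ≤ E₀Qₖ₊₁`.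
-/

open Real Set

theorem ConcaveOn.sum {𝕜 E β ι : Type*} [Semiring 𝕜] [PartialOrder 𝕜] [AddCommMonoid E]
    [SMul 𝕜 E] [AddCommMonoid β] [PartialOrder β] [IsOrderedAddMonoid β] [Module 𝕜 β]
    {s : Set E} (hs : Convex 𝕜 s) {t : Finset ι} {f : ι → E → β}
    (hf : ∀ i ∈ t, ConcaveOn 𝕜 s (f i)) : ConcaveOn 𝕜 s fun x => ∑ i ∈ t, f i x := by
  induction t using Finset.cons_induction with
  | empty => simpa using concaveOn_const 0 hs
  | cons i t hi ih =>
    simp only [Finset.sum_cons]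
    exact (hf i (t.mem_cons_self i)).add (ih fun j hj => hf j (Finset.mem_cons_of_mem hj))

theorem ConcaveOn.comp_eval {𝕜 E β ι : Type*} [Semiring 𝕜] [PartialOrder 𝕜] [AddCommMonoid E]
    [Module 𝕜 E] [AddCommMonoid β] [PartialOrder β] [SMul 𝕜 β] {s : Set E} {f : E → β}
    (hf : ConcaveOn 𝕜 s f) (i : ι) : ConcaveOn 𝕜 {x : ι → E | x i ∈ s} fun x => f (x i) :=
  hf.comp_linearMap (LinearMap.proj (R := 𝕜) (φ := fun _ : ι => E) i)

theorem concaveOn_mul_log_add_sub_mul_log_add {a b m n : ℝ} (hab : a ≤ b) (hm : 0 ≤ m)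
    (hmn : m ≤ n) : ConcaveOn ℝ (Ioi (-a)) fun x => n * log (a + x) - m * log (b + x) := by
  have ha : ∀ x ∈ Ioi (-a), 0 < a + x := fun x hx => by linarith [mem_Ioi.mp hx]
  have hb : ∀ x ∈ Ioi (-a), 0 < b + x := fun x hx => by linarith [mem_Ioi.mp hx]
  have hderiv : ∀ x ∈ Ioi (-a), HasDerivAt (fun x => n * log (a + x) - m * log (b + x))
      (n * (a + x)⁻¹ - m * (b + x)⁻¹) x := fun x hx => by
    have h : HasDerivAt (fun x => n * log (a + x) - m * log (b + x))
        (n * (1 / (a + x)) - m * (1 / (b + x))) x :=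
      ((((hasDerivAt_id' x).const_add a).log (ha x hx).ne').const_mul n).sub
        ((((hasDerivAt_id' x).const_add b).log (hb x hx).ne').const_mul m)
    simpa only [one_div] using h
  have hderiv2 : ∀ x ∈ Ioi (-a), HasDerivAt (fun x => n * (a + x)⁻¹ - m * (b + x)⁻¹)
      (m / (b + x) ^ 2 - n / (a + x) ^ 2) x := fun x hx => by
    have h : HasDerivAt (fun x => n * (a + x)⁻¹ - m * (b + x)⁻¹)
        (n * (-1 / (a + x) ^ 2) - m * (-1 / (b + x) ^ 2)) x :=
      ((((hasDerivAt_id' x).const_add a).inv (ha x hx).ne').const_mul n).sub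
        ((((hasDerivAt_id' x).const_add b).inv (hb x hx).ne').const_mul m)
    exact h.congr_deriv (by ring)
  refine concaveOn_of_hasDerivWithinAt2_nonpos (convex_Ioi _)
    (fun x hx => (hderiv x hx).continuousAt.continuousWithinAt)
    (fun x hx => (hderiv x (interior_subset hx)).hasDerivWithinAt)
    (fun x hx => (hderiv2 x (interior_subset hx)).hasDerivWithinAt) fun x hx => ?_
  have hax := ha x (interior_subset hx)
  rw [sub_nonpos]
  gcongr
  linarith

theorem Finset.sum_Icc_sub_prev {α M : Type*} [AddCommGroup M] (F : ℕ → α → M) (b : ℕ → α)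
    (x₀ : α) {K : ℕ} (hK : 1 ≤ K) :
    ∑ k ∈ Icc 1 K, (F k (b k) - F k (if k = 1 then x₀ else b (k - 1))) =
      ∑ k ∈ Ico 1 K, (F k (b k) - F (k + 1) (b k)) + F K (b K) - F 1 x₀ := by
  have hprev : ∑ k ∈ Icc 1 K, F k (if k = 1 then x₀ else b (k - 1)) =
      F 1 x₀ + ∑ k ∈ Ico 1 K, F (k + 1) (b k) := by
    rw [← Finset.Ico_add_one_right_eq_Icc, Finset.sum_eq_sum_Ico_succ_bot (by omega), if_pos rfl,
      ← Finset.sum_Ico_add' (c := 1)]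
    congr 1
    refine Finset.sum_congr rfl fun k hk => ?_
    rw [if_neg (by simp at hk; omega), Nat.add_sub_cancel]
  rw [Finset.sum_sub_distrib, hprev, ← Finset.Ico_add_one_right_eq_Icc, Finset.sum_Ico_succ_top hK,
    Finset.sum_sub_distrib]
  abel

theorem concaveOn_mul_log_div_add_sub {E m n : ℝ} (hE : 0 ≤ E) (hm : 0 < m) (hmn : m ≤ n) :
    ConcaveOn ℝ (Ioi 0) fun x => n * log (E / n + x) - m * log (E / m + x) := by
  have hn : 0 < n := hm.trans_le hmn
  refine (concaveOn_mul_log_add_sub_mul_log_add ?_ hm.le hmn).subset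
    (Ioi_subset_Ioi (neg_nonpos.2 (by positivity))) (convex_Ioi 0)
  gcongr

theorem strictAntiOn_Icc_of_succ_lt {α : Type*} [Preorder α] {f : ℕ → α} {a b : ℕ}
    (hf : ∀ k, a ≤ k → k < b → f (k + 1) < f k) : StrictAntiOn f (Icc a b) :=
  strictAntiOn_of_succ_lt ordConnected_Icc fun k _ hk hk1 =>
    hf k hk.1 (by rw [Order.succ_eq_add_one] at hk1; exact hk1.2)

/-- The digital energy
`E_D(β) = ∑_{k=1}^K N k · log ((E₀ Q k + β k)/(E₀ Q k + β (k-1)))`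
(with `Q k = 1/N k` and `β 0 = 1` fixed) is a concave function of
`(β 1, …, β K)` on the open positive orthant. -/
theorem ED_concave
    (K : ℕ) (hK : 1 ≤ K) (N : ℕ → ℝ)
    (hNmono : ∀ k, 1 ≤ k → k < K → N (k + 1) < N k)
    (hNK : 0 < N K)
    (E0 : ℝ) (hE0 : 0 ≤ E0)
    (ED : (ℕ → ℝ) → ℝ)
    (hED : ∀ β : ℕ → ℝ, ED β = ∑ k ∈ Finset.Icc 1 K,
      N k * Real.log ((E0 * (1 / N k) + β k) /
        (E0 * (1 / N k) + (if k = 1 then 1 else β (k - 1))))) :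
    ConcaveOn ℝ {β : ℕ → ℝ | ∀ k, 0 < β k} ED := by
  simp only [mul_one_div] at hED
  set F : ℕ → ℝ → ℝ := fun k x => N k * log (E0 / N k + x)
  have hNpos : ∀ k ∈ Icc 1 K, 0 < N k := fun k hk =>
    hNK.trans_le ((strictAntiOn_Icc_of_succ_lt hNmono).antitoneOn hk ⟨hK, le_rfl⟩ hk.2)
  have hstep : ∀ k ∈ Finset.Ico 1 K, ConcaveOn ℝ (Ioi 0) fun x => F k x - F (k + 1) x := by
    intro k hk
    obtain ⟨hk1, hkK⟩ := Finset.mem_Ico.1 hk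
    exact concaveOn_mul_log_div_add_sub hE0 (hNpos (k + 1) ⟨by omega, hkK⟩) (hNmono k hk1 hkK).le
  have hlast : ConcaveOn ℝ (Ioi 0) (F K) := by
    simpa using (concaveOn_mul_log_add_sub_mul_log_add le_rfl le_rfl hNK.le (a := E0 / N K)).subset
      (Ioi_subset_Ioi (neg_nonpos.2 (by positivity))) (convex_Ioi 0)
  have horthant : Convex ℝ {β : ℕ → ℝ | ∀ k, 0 < β k} := by
    simpa [Set.pi] using convex_pi (𝕜 := ℝ) (s := univ) fun (_ : ℕ) _ => convex_Ioi (0 : ℝ)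
  have hconc : ConcaveOn ℝ {β : ℕ → ℝ | ∀ k, 0 < β k} fun β =>
      ∑ k ∈ Finset.Ico 1 K, (F k (β k) - F (k + 1) (β k)) + F K (β K) - F 1 1 :=
    ((ConcaveOn.sum horthant fun k hk =>
      ((hstep k hk).comp_eval k).subset (fun β hβ => hβ k) horthant).add
      ((hlast.comp_eval K).subset (fun β hβ => hβ K) horthant)).sub (convexOn_const _ horthant)
  refine hconc.congr fun β hβ => ?_
  beta_reduce
  rw [hED, ← Finset.sum_Icc_sub_prev F β 1 hK]
  refine Finset.sum_congr rfl fun k hk => ?_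
  have hEN : 0 ≤ E0 / N k := div_nonneg hE0 (hNpos k (Finset.mem_Icc.1 hk)).le
  have hprev : 0 < E0 / N k + if k = 1 then 1 else β (k - 1) := by
    split_ifs <;> linarith [hβ (k - 1)]
  rw [log_div (by linarith [hβ k]) hprev.ne', mul_sub]
end

section
/- Let $N_1 > N_2 > 0$, $a_2 > a_1 > 1$ be reals, set $M = \dfrac{a_1}{\tfrac{1}{N_2} - \tfrac{1}{N_1}}$ and $E_0^* = \dfrac{-(M - N_2) + \sqrt{(M - N_2)^2 + 4 N_1 N_2}}{2}$, and define on $[0,\infty)$ the function $$f(E_0) = E_0 + N_1 \log\frac{a_1}{E_0/N_1 + 1} + N_2 \log\frac{a_2}{E_0\,(1/N_2 - 1/N_1) + a_1}.$$ Then for every real $L > 0$ and every $E_0 \in [0, L]$, $$f(E_0) \;\ge\; f\bigl(\min(L, E_0^*)\bigr);$$ that is, the minimum of $f$ over $[0,L]$ is attained at $\min(L, E_0^*)$. -/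
/-!
On `[0, ∞)` the derivative of `f` is
`1 - N1 / (E₀ + N1) - N2 / (E₀ + M) = (E₀² + (M - N2) E₀ - N1 N2) / ((E₀ + N1) (E₀ + M))`,
whose numerator is a quadratic with the single positive root `E0*`. So `f` decreases on `[0, E0*]`
and increases on `[E0*, ∞)`, and its minimum over `[0, L]` sits at `E0*` or, if `E0*` lies beyond
`L`, at `L`.
-/

open Real Set

theorem le_of_antitoneOn_Icc_of_monotoneOn_Ici {α β : Type*} [LinearOrder α] [Preorder β]
    {f : α → β} {a s L x : α} (hanti : AntitoneOn f (Icc a s)) (hmono : MonotoneOn f (Ici s))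
    (hx : x ∈ Icc a L) : f (min L s) ≤ f x := by
  rcases le_total s L with hsL | hLs
  · rw [min_eq_right hsL]
    rcases le_total x s with hxs | hsx
    · exact hanti ⟨hx.1, hxs⟩ ⟨hx.1.trans hxs, le_rfl⟩ hxs
    · exact hmono (mem_Ici.2 le_rfl) hsx hsx
  · rw [min_eq_left hLs]
    exact hanti ⟨hx.1, hx.2.trans hLs⟩ ⟨hx.1.trans hx.2, hLs⟩ hx.2

theorem antitoneOn_Icc_and_monotoneOn_Ici_of_hasDerivAt {f f' : ℝ → ℝ} {a s : ℝ} (has : a ≤ s)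
    (hf : ∀ x, a ≤ x → HasDerivAt f (f' x) x) (hneg : ∀ x ∈ Ioo a s, f' x ≤ 0)
    (hpos : ∀ x, s < x → 0 ≤ f' x) : AntitoneOn f (Icc a s) ∧ MonotoneOn f (Ici s) := by
  refine ⟨antitoneOn_of_hasDerivWithinAt_nonpos (f' := f') (convex_Icc a s)
      (fun x hx ↦ (hf x hx.1).continuousAt.continuousWithinAt) (fun x hx ↦ ?_) ?_,
    monotoneOn_of_hasDerivWithinAt_nonneg (f' := f') (convex_Ici s)
      (fun x hx ↦ (hf x (has.trans hx)).continuousAt.continuousWithinAt) (fun x hx ↦ ?_) ?_⟩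
  · rw [interior_Icc] at hx ⊢
    exact (hf x hx.1.le).hasDerivWithinAt
  · rwa [interior_Icc]
  · rw [interior_Ici] at hx ⊢
    exact (hf x (has.trans hx.le)).hasDerivWithinAt
  · rwa [interior_Ici]

/-- The positive root of `X² + p X - q` when `q > 0`. -/
noncomputable def posRoot (p q : ℝ) : ℝ := (-p + √(p ^ 2 + 4 * q)) / 2

section posRoot

variable {p q : ℝ}

theorem posRoot_sq_add_mul_sub_eq_zero (hq : 0 ≤ q) :
    posRoot p q ^ 2 + p * posRoot p q - q = 0 := by
  have hsq : √(p ^ 2 + 4 * q) ^ 2 = p ^ 2 + 4 * q := sq_sqrt (by positivity)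
  unfold posRoot
  linear_combination hsq / 4

theorem mem_Ioo_sqrt_sq_add_four_mul (hq : 0 < q) :
    p ∈ Ioo (-√(p ^ 2 + 4 * q)) √(p ^ 2 + 4 * q) :=
  sq_lt.1 (by linarith)

theorem posRoot_pos (hq : 0 < q) : 0 < posRoot p q := by
  have := (mem_Ioo_sqrt_sq_add_four_mul (p := p) hq).2
  unfold posRoot
  linarith

theorem posRoot_add_pos (hq : 0 < q) : 0 < posRoot p q + p := by
  have := (mem_Ioo_sqrt_sq_add_four_mul (p := p) hq).1
  unfold posRoot
  linarith

end posRoot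

theorem hasDerivAt_log_const_div {g : ℝ → ℝ} {a g' x : ℝ} (ha : a ≠ 0) (hg : HasDerivAt g g' x)
    (hx : g x ≠ 0) : HasDerivAt (fun y ↦ log (a / g y)) (-g' / g x) x := by
  convert ((hasDerivAt_const x a).fun_div hg hx).log (div_ne_zero ha hx) using 1
  field_simp
  ring

theorem hasDerivAt_total_energy {N1 N2 a1 a2 c M x : ℝ} (hN1 : N1 ≠ 0) (hc : c ≠ 0)
    (ha1 : a1 ≠ 0) (ha2 : a2 ≠ 0) (hM : a1 = M * c) (hx1 : x + N1 ≠ 0) (hx2 : x + M ≠ 0) :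
    HasDerivAt (fun E ↦ E + N1 * log (a1 / (E / N1 + 1)) + N2 * log (a2 / (E * c + a1)))
      (1 - N1 / (x + N1) - N2 / (x + M)) x := by
  have h1 : x / N1 + 1 = (x + N1) / N1 := by field_simp
  have h2 : x * c + a1 = (x + M) * c := by rw [hM]; ring
  have hlog1 := hasDerivAt_log_const_div ha1 (((hasDerivAt_id' x).div_const N1).add_const 1)
    (by rw [h1]; exact div_ne_zero hx1 hN1)
  have hlog2 := hasDerivAt_log_const_div ha2 (((hasDerivAt_id' x).mul_const c).add_const a1)
    (by rw [h2]; exact mul_ne_zero hx2 hc)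
  refine (((hasDerivAt_id' x).add (hlog1.const_mul N1)).add (hlog2.const_mul N2)).congr_deriv ?_
  rw [h1, h2]
  field_simp
  ring

theorem one_sub_div_sub_div_eq_mul {N1 N2 M r x : ℝ} (hr : r ^ 2 + (M - N2) * r - N1 * N2 = 0)
    (h1 : x + N1 ≠ 0) (h2 : x + M ≠ 0) :
    1 - N1 / (x + N1) - N2 / (x + M) = (x - r) * ((x + r + (M - N2)) / ((x + N1) * (x + M))) := by
  field_simp
  linear_combination hr

/-- For the two-level staircase profile, the total energy
`f(E₀) = E₀ + N1 log (a1/(E₀/N1 + 1)) + N2 log (a2/(E₀(1/N2 - 1/N1) + a1))`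
attains its minimum over `[0, L]` at `min L E0*`, where `E0*` is the unique
positive stationary point. -/
theorem min_total_energy_K2
    (N1 N2 a1 a2 : ℝ) (h12 : N2 < N1) (h2 : 0 < N2)
    (ha1 : 1 < a1) (ha12 : a1 < a2)
    (M : ℝ) (hM : M = a1 / (1 / N2 - 1 / N1))
    (E0s : ℝ)
    (hE0s : E0s = (-(M - N2) + Real.sqrt ((M - N2) ^ 2 + 4 * N1 * N2)) / 2)
    (f : ℝ → ℝ)
    (hf : ∀ E0 : ℝ, f E0 = E0 + N1 * Real.log (a1 / (E0 / N1 + 1)) +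
      N2 * Real.log (a2 / (E0 * (1 / N2 - 1 / N1) + a1))) :
    ∀ L : ℝ, 0 < L → ∀ E0 ∈ Set.Icc (0 : ℝ) L, f (min L E0s) ≤ f E0 := by
  intro L _ E0 hE0
  have hN1 : 0 < N1 := h2.trans h12
  have hc : 0 < 1 / N2 - 1 / N1 := sub_pos.2 (one_div_lt_one_div_of_lt h2 h12)
  have hMpos : 0 < M := hM ▸ div_pos (by linarith) hc
  have hq : 0 < N1 * N2 := mul_pos hN1 h2
  have hroot : E0s = posRoot (M - N2) (N1 * N2) := by rw [hE0s, posRoot, ← mul_assoc]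
  have hE0s_pos : 0 < E0s := hroot ▸ posRoot_pos hq
  have hE0s_add : 0 < E0s + (M - N2) := hroot ▸ posRoot_add_pos hq
  have hderiv : ∀ x, 0 ≤ x → HasDerivAt f (1 - N1 / (x + N1) - N2 / (x + M)) x := fun x hx ↦
    funext hf ▸ hasDerivAt_total_energy hN1.ne' hc.ne' (by positivity) (by linarith)
      (by rw [hM, div_mul_cancel₀ _ hc.ne']) (by positivity) (by positivity)
  have hfactor : ∀ x, 0 ≤ x → 1 - N1 / (x + N1) - N2 / (x + M) =
      (x - E0s) * ((x + E0s + (M - N2)) / ((x + N1) * (x + M))) := fun x hx ↦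
    one_sub_div_sub_div_eq_mul (hroot ▸ posRoot_sq_add_mul_sub_eq_zero hq.le) (by positivity)
      (by positivity)
  have hweight : ∀ x, 0 ≤ x → 0 < (x + E0s + (M - N2)) / ((x + N1) * (x + M)) := fun x hx ↦
    div_pos (by linarith) (by positivity)
  obtain ⟨hanti, hmono⟩ := antitoneOn_Icc_and_monotoneOn_Ici_of_hasDerivAt hE0s_pos.le hderiv
    (fun x hx ↦ hfactor x hx.1.le ▸
      mul_nonpos_of_nonpos_of_nonneg (by linarith [hx.2]) (hweight x hx.1.le).le)
    (fun x hx ↦ hfactor x (by linarith) ▸ mul_nonneg (by linarith) (hweight x (by linarith)).le)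
  exact le_of_antitoneOn_Icc_of_monotoneOn_Ici hanti hmono hE0
end

section
/- Let $N_1 > N_2 > 0$ and $a_2 > a_1 > 1$ be reals, and define for $\tau \ge 0$ $$g(\tau) = N_1 \log\frac{1+\tau}{\tfrac{1}{a_1}+\tau} + N_2 \log\frac{a_2\left(\tfrac{1}{a_2}+\tau\right)}{1+\tau}.$$ If $\dfrac{N_2}{N_1} < \dfrac{a_1 - 1}{a_2 - 1}$, then for all $\tau \ge 0$ one has $g(\tau) \le g(0) = N_1 \log a_1$; that is, the maximum of $g$ over $[0,\infty)$ is attained at $\tau = 0$ with value $N_1 \log a_1$. -/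
/-!
Put `ℓ(a) = log (1 + a τ) - log (1 + τ)`, so that `g τ = N1 (log a1 - ℓ a1) + N2 ℓ a2` and
`g 0 = N1 log a1`. Since `a ↦ log (1 + a τ)` is concave, its secant slopes from `a = 1` decrease:
`ℓ a2 / (a2 - 1) ≤ ℓ a1 / (a1 - 1)`. As `ℓ a2 ≥ 0` and `N2 < N1 (a1 - 1) / (a2 - 1)`, this gives
`N2 ℓ a2 ≤ N1 ℓ a1`, i.e. `g τ ≤ g 0`.
-/

open Real Set

theorem concaveOn_log_one_add_mul {τ : ℝ} (hτ : 0 ≤ τ) :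
    ConcaveOn ℝ (Ici 0) fun a => log (1 + a * τ) := by
  have hline : ∀ a : ℝ, AffineMap.lineMap 1 (1 + τ) a = 1 + a * τ := fun a => by
    rw [AffineMap.lineMap_apply_ring']; ring
  refine (strictConcaveOn_log_Ioi.concaveOn.comp_affineMap (AffineMap.lineMap 1 (1 + τ))).subset
    (fun a (ha : 0 ≤ a) => ?_) (convex_Ici 0) |>.congr fun a _ => ?_
  · show 0 < AffineMap.lineMap (1 : ℝ) (1 + τ) a
    rw [hline]; positivity
  · simp only [Function.comp_apply, hline]

theorem log_one_add_mul_secant_anti {τ a b : ℝ} (hτ : 0 ≤ τ) (ha : 1 < a) (hab : a ≤ b) :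
    (log (1 + b * τ) - log (1 + τ)) / (b - 1) ≤ (log (1 + a * τ) - log (1 + τ)) / (a - 1) := by
  have hanti := (concaveOn_log_one_add_mul hτ).slope_anti (x := 1) (mem_Ici.2 zero_le_one)
  have hmem : ∀ c : ℝ, 1 < c → c ∈ Ici (0 : ℝ) \ {1} := fun c hc =>
    ⟨(zero_lt_one.trans hc).le, hc.ne'⟩
  simpa only [slope_def_field, one_mul] using hanti (hmem a ha) (hmem b (ha.trans_le hab)) hab

theorem log_mul_one_div_add_div {τ a : ℝ} (hτ : 0 ≤ τ) (ha : 0 < a) :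
    log (a * (1 / a + τ) / (1 + τ)) = log (1 + a * τ) - log (1 + τ) := by
  rw [mul_add, mul_one_div_cancel ha.ne', log_div (by positivity) (by positivity)]

theorem log_one_add_div_one_div_add {τ a : ℝ} (hτ : 0 ≤ τ) (ha : 0 < a) :
    log ((1 + τ) / (1 / a + τ)) = log a - (log (1 + a * τ) - log (1 + τ)) := by
  have hquot : (1 + τ) / (1 / a + τ) = a / (a * (1 / a + τ) / (1 + τ)) := by
    field_simp
  rw [hquot, log_div ha.ne' (by positivity), log_mul_one_div_add_div hτ ha]

/-- For the two-level converse bound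
`g(τ) = N1 log ((1+τ)/(1/a1+τ)) + N2 log (a2 (1/a2+τ)/(1+τ))`, if
`N2/N1 < (a1-1)/(a2-1)` then `g` is maximized over `[0, ∞)` at `τ = 0`,
with value `N1 log a1`. -/
theorem converse_max_at_zero
    (N1 N2 a1 a2 : ℝ) (h12 : N2 < N1) (h2 : 0 < N2)
    (ha1 : 1 < a1) (ha12 : a1 < a2)
    (hcond : N2 / N1 < (a1 - 1) / (a2 - 1))
    (g : ℝ → ℝ)
    (hg : ∀ τ : ℝ, g τ = N1 * Real.log ((1 + τ) / (1 / a1 + τ)) +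
      N2 * Real.log (a2 * (1 / a2 + τ) / (1 + τ))) :
    (∀ τ : ℝ, 0 ≤ τ → g τ ≤ g 0) ∧ g 0 = N1 * Real.log a1 := by
  have hN1 : 0 < N1 := h2.trans h12
  have ha1' : 0 < a1 := one_pos.trans ha1
  have ha2' : 0 < a2 := ha1'.trans ha12
  have hg' : ∀ τ : ℝ, 0 ≤ τ → g τ = N1 * (log a1 - (log (1 + a1 * τ) - log (1 + τ))) +
      N2 * (log (1 + a2 * τ) - log (1 + τ)) := fun τ hτ => by
    rw [hg, log_one_add_div_one_div_add hτ ha1', log_mul_one_div_add_div hτ ha2']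
  have hg0 : g 0 = N1 * log a1 := by simp [hg' 0 le_rfl]
  refine ⟨fun τ hτ => ?_, hg0⟩
  set ℓ1 := log (1 + a1 * τ) - log (1 + τ)
  set ℓ2 := log (1 + a2 * τ) - log (1 + τ)
  have hℓ2 : 0 ≤ ℓ2 := sub_nonneg.2 (log_le_log (by positivity) (by nlinarith))
  have hsecant : ℓ2 * (a1 - 1) ≤ ℓ1 * (a2 - 1) :=
    (div_le_div_iff₀ (by linarith) (by linarith)).1 (log_one_add_mul_secant_anti hτ ha1 ha12.le)
  have hN2 : N2 < N1 * ((a1 - 1) / (a2 - 1)) := by rwa [div_lt_iff₀' hN1] at hcond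
  suffices N2 * ℓ2 ≤ N1 * ℓ1 by rw [hg' τ hτ, hg0]; linarith
  calc N2 * ℓ2 ≤ N1 * ((a1 - 1) / (a2 - 1)) * ℓ2 := mul_le_mul_of_nonneg_right hN2.le hℓ2
    _ = N1 * (ℓ2 * (a1 - 1) / (a2 - 1)) := by ring
    _ ≤ N1 * ℓ1 := mul_le_mul_of_nonneg_left ((div_le_iff₀ (by linarith)).2 hsecant) hN1.le
end

section
/- Let $N_1 > N_2 > 0$ and $a_2 > a_1 > 1$ be reals, and define for $\tau \ge 0$ $$g(\tau) = N_1 \log\frac{1+\tau}{\tfrac{1}{a_1}+\tau} + N_2 \log\frac{a_2\left(\tfrac{1}{a_2}+\tau\right)}{1+\tau}.$$ If $\dfrac{N_2}{N_1} > \dfrac{a_2(a_1 - 1)}{a_1(a_2 - 1)}$, then $g$ is strictly increasing on $[0,\infty)$, $g(\tau) < N_2 \log a_2$ for every $\tau \ge 0$, and $g(\tau) \to N_2 \log a_2$ as $\tau \to \infty$; consequently $\sup_{\tau \ge 0} g(\tau) = N_2 \log a_2$. -/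
/-!
The derivative of `g` is
`(N2 (a2 - 1) (1 + a1 τ) - N1 (a1 - 1) (1 + a2 τ)) / ((1 + τ) (1 + a1 τ) (1 + a2 τ))`.
Its numerator is affine in `τ`: the slope is positive by the hypothesis on `N2 / N1`, and so is the
value at `0`, because `a2 / a1 > 1`. The two fractions under the logarithms tend to `1` and `a2`,
so `g` increases strictly to `N2 log a2`, which is therefore its supremum and is never attained.
-/

open Filter Set Topology

section MonotoneLimit

variable {β γ : Type*} [LinearOrder β] [TopologicalSpace γ] [Preorder γ] [OrderClosedTopology γ]
  {f : β → γ} {a b : β} {L : γ}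

theorem MonotoneOn.le_of_tendsto_atTop (hf : MonotoneOn f (Ici a))
    (hL : Tendsto f atTop (𝓝 L)) (hb : a ≤ b) : f b ≤ L :=
  have : Nonempty β := ⟨b⟩
  ge_of_tendsto hL <| (eventually_ge_atTop b).mono fun _ hx => hf hb (hb.trans hx) hx

theorem MonotoneOn.isLUB_image_Ici_of_tendsto_atTop (hf : MonotoneOn f (Ici a))
    (hL : Tendsto f atTop (𝓝 L)) : IsLUB (f '' Ici a) L := by
  have : Nonempty β := ⟨a⟩
  refine ⟨?_, fun M hM => le_of_tendsto hL ?_⟩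
  · rintro _ ⟨b, hb, rfl⟩
    exact hf.le_of_tendsto_atTop hL hb
  · filter_upwards [eventually_ge_atTop a] with b hb using hM ⟨b, hb, rfl⟩

theorem StrictMonoOn.lt_of_tendsto_atTop [NoMaxOrder β] (hf : StrictMonoOn f (Ici a))
    (hL : Tendsto f atTop (𝓝 L)) (hb : a ≤ b) : f b < L := by
  obtain ⟨c, hbc⟩ := exists_gt b
  exact (hf hb (hb.trans hbc.le) hbc).trans_le
    (hf.monotoneOn.le_of_tendsto_atTop hL (hb.trans hbc.le))

end MonotoneLimit

theorem strictMonoOn_Ici_of_hasDerivAt_pos {f f' : ℝ → ℝ} {a : ℝ}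
    (hf : ∀ x, a ≤ x → HasDerivAt f (f' x) x) (hf' : ∀ x, a < x → 0 < f' x) :
    StrictMonoOn f (Ici a) :=
  strictMonoOn_of_hasDerivWithinAt_pos (convex_Ici a)
    (fun x hx => (hf x hx).continuousAt.continuousWithinAt)
    (fun x hx => by
      rw [interior_Ici] at hx
      exact (hf x hx.le).hasDerivWithinAt)
    (fun x hx => by
      rw [interior_Ici] at hx
      exact hf' x hx)

theorem tendsto_add_div_add_atTop (b c : ℝ) :
    Tendsto (fun t : ℝ => (b + t) / (c + t)) atTop (𝓝 1) := by
  have hshift : Tendsto (fun t : ℝ => 1 + (b - c) / (c + t)) atTop (𝓝 1) := by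
    simpa using tendsto_const_nhds.add <|
      tendsto_const_nhds.div_atTop (tendsto_atTop_add_const_left _ c tendsto_id)
  refine hshift.congr' ?_
  filter_upwards [eventually_gt_atTop (-c)] with t ht
  have : c + t ≠ 0 := by linarith
  field_simp
  ring

theorem tendsto_log_mul_add_div_add_atTop {a : ℝ} (ha : a ≠ 0) (b c : ℝ) :
    Tendsto (fun t : ℝ => Real.log (a * (b + t) / (c + t))) atTop (𝓝 (Real.log a)) := by
  have h := (tendsto_add_div_add_atTop b c).const_mul a
  rw [mul_one] at h
  simpa only [mul_div_assoc] using h.log ha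

theorem hasDerivAt_log_mul_add_div_add {a b c τ : ℝ} (ha : a ≠ 0) (hb : b + τ ≠ 0)
    (hc : c + τ ≠ 0) :
    HasDerivAt (fun t : ℝ => Real.log (a * (b + t) / (c + t)))
      ((c - b) / ((b + τ) * (c + τ))) τ := by
  have hnum : HasDerivAt (fun t => a * (b + t)) a τ := by
    simpa using ((hasDerivAt_id τ).const_add b).const_mul a
  have hden : HasDerivAt (fun t => c + t) 1 τ := by
    simpa using (hasDerivAt_id τ).const_add c
  refine ((hnum.div hden hc).log (by simp [ha, hb, hc])).congr_deriv ?_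
  simp only [Pi.div_apply]
  field_simp
  ring

theorem two_level_deriv_pos {N1 N2 a1 a2 τ : ℝ} (hN1 : 0 < N1) (ha1 : 1 < a1) (ha12 : a1 < a2)
    (hcross : a2 * (a1 - 1) * N1 < a1 * (a2 - 1) * N2) (hτ : 0 ≤ τ) :
    0 < N1 * ((1 / a1 - 1) / ((1 + τ) * (1 / a1 + τ))) +
      N2 * ((1 - 1 / a2) / ((1 / a2 + τ) * (1 + τ))) := by
  have ha1' : 0 < a1 := by linarith
  have ha2' : 0 < a2 := by linarith
  have hat0 : N1 * (a1 - 1) < N2 * (a2 - 1) := by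
    refine lt_of_mul_lt_mul_left ?_ ha1'.le
    calc a1 * (N1 * (a1 - 1)) < a2 * (a1 - 1) * N1 := by
          nlinarith [mul_pos hN1 (sub_pos.2 ha1)]
      _ < a1 * (a2 - 1) * N2 := hcross
      _ = a1 * (N2 * (a2 - 1)) := by ring
  have hnum : N1 * (a1 - 1) * (1 + a2 * τ) < N2 * (a2 - 1) * (1 + a1 * τ) := by
    nlinarith [mul_le_mul_of_nonneg_left hcross.le hτ]
  have hform : N1 * ((1 / a1 - 1) / ((1 + τ) * (1 / a1 + τ))) +
      N2 * ((1 - 1 / a2) / ((1 / a2 + τ) * (1 + τ))) =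
      (N2 * (a2 - 1) * (1 + a1 * τ) - N1 * (a1 - 1) * (1 + a2 * τ)) /
        ((1 + τ) * (1 + a1 * τ) * (1 + a2 * τ)) := by
    field_simp
    ring
  rw [hform]
  exact div_pos (sub_pos.2 hnum) (by positivity)

theorem converse_sup_at_infinity_general
    (N1 N2 a1 a2 : ℝ) (h2 : 0 < N2)
    (ha1 : 1 < a1) (ha12 : a1 < a2)
    (hcond : a2 * (a1 - 1) / (a1 * (a2 - 1)) < N2 / N1)
    (g : ℝ → ℝ)
    (hg : ∀ τ : ℝ, g τ = N1 * Real.log ((1 + τ) / (1 / a1 + τ)) +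
      N2 * Real.log (a2 * (1 / a2 + τ) / (1 + τ))) :
    StrictMonoOn g (Set.Ici (0 : ℝ)) ∧
    (∀ τ : ℝ, 0 ≤ τ → g τ < N2 * Real.log a2) ∧
    Filter.Tendsto g Filter.atTop (nhds (N2 * Real.log a2)) ∧
    IsLUB (g '' Set.Ici (0 : ℝ)) (N2 * Real.log a2) := by
  have ha2 : 1 < a2 := ha1.trans ha12
  have hden : 0 < a1 * (a2 - 1) := mul_pos (by linarith) (sub_pos.2 ha2)
  have hratio : 0 < a2 * (a1 - 1) / (a1 * (a2 - 1)) :=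
    div_pos (mul_pos (by linarith) (sub_pos.2 ha1)) hden
  have hN1 : 0 < N1 := (div_pos_iff_of_pos_left h2).1 (hratio.trans hcond)
  have hcross : a2 * (a1 - 1) * N1 < a1 * (a2 - 1) * N2 := by
    rw [div_lt_div_iff₀ hden hN1] at hcond
    linarith
  have hg' : g = _ := funext hg
  have hderiv : ∀ τ, 0 ≤ τ → HasDerivAt g (N1 * ((1 / a1 - 1) / ((1 + τ) * (1 / a1 + τ))) +
      N2 * ((1 - 1 / a2) / ((1 / a2 + τ) * (1 + τ)))) τ := by
    intro τ hτ
    have h1 : HasDerivAt (fun t => Real.log ((1 + t) / (1 / a1 + t)))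
        ((1 / a1 - 1) / ((1 + τ) * (1 / a1 + τ))) τ := by
      simpa only [one_mul] using
        hasDerivAt_log_mul_add_div_add one_ne_zero (by positivity) (by positivity)
    rw [hg']
    exact (h1.const_mul N1).add ((hasDerivAt_log_mul_add_div_add (by positivity)
      (by positivity) (by positivity)).const_mul N2)
  have hmono := strictMonoOn_Ici_of_hasDerivAt_pos hderiv
    fun τ hτ => two_level_deriv_pos hN1 ha1 ha12 hcross hτ.le
  have hlim : Tendsto g atTop (𝓝 (N2 * Real.log a2)) := by
    rw [hg']
    simpa only [one_mul, Real.log_one, mul_zero, zero_add] using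
      ((tendsto_log_mul_add_div_add_atTop one_ne_zero 1 (1 / a1)).const_mul N1).add
        ((tendsto_log_mul_add_div_add_atTop (by positivity) (1 / a2) 1).const_mul N2)
  exact ⟨hmono, fun τ => hmono.lt_of_tendsto_atTop hlim, hlim,
    hmono.monotoneOn.isLUB_image_Ici_of_tendsto_atTop hlim⟩

/-- For the two-level converse bound
`g(τ) = N1 log ((1+τ)/(1/a1+τ)) + N2 log (a2 (1/a2+τ)/(1+τ))`, if
`N2/N1 > a2(a1-1)/(a1(a2-1))` then `g` is strictly increasing on `[0, ∞)`,
bounded above by `N2 log a2`, tends to `N2 log a2` at infinity, and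
`sup_{τ ≥ 0} g(τ) = N2 log a2`. -/
theorem converse_sup_at_infinity
    (N1 N2 a1 a2 : ℝ) (h12 : N2 < N1) (h2 : 0 < N2)
    (ha1 : 1 < a1) (ha12 : a1 < a2)
    (hcond : a2 * (a1 - 1) / (a1 * (a2 - 1)) < N2 / N1)
    (g : ℝ → ℝ)
    (hg : ∀ τ : ℝ, g τ = N1 * Real.log ((1 + τ) / (1 / a1 + τ)) +
      N2 * Real.log (a2 * (1 / a2 + τ) / (1 + τ))) :
    StrictMonoOn g (Set.Ici (0 : ℝ)) ∧
    (∀ τ : ℝ, 0 ≤ τ → g τ < N2 * Real.log a2) ∧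
    Filter.Tendsto g Filter.atTop (nhds (N2 * Real.log a2)) ∧
    IsLUB (g '' Set.Ici (0 : ℝ)) (N2 * Real.log a2) :=
  converse_sup_at_infinity_general N1 N2 a1 a2 h2 ha1 ha12 hcond g hg
end

section
/- Let $N_1 > N_2 > 0$ and $a_2 > a_1 > 1$ be reals with $$\frac{a_1 - 1}{a_2 - 1} < \frac{N_2}{N_1} < \frac{a_2(a_1 - 1)}{a_1(a_2 - 1)},$$ define $g(\tau) = N_1 \log\frac{1+\tau}{\tfrac{1}{a_1}+\tau} + N_2 \log\frac{a_2(\tfrac{1}{a_2}+\tau)}{1+\tau}$ and $$\tau_1^* = \frac{N_1\left(\tfrac{1}{a_1} - 1\right)\tfrac{1}{a_2} - N_2\left(\tfrac{1}{a_2} - 1\right)\tfrac{1}{a_1}}{N_1\left(1 - \tfrac{1}{a_1}\right) - N_2\left(1 - \tfrac{1}{a_2}\right)}.$$ Then $$g(\tau_1^*) = N_1 \log\frac{a_1\,(a_1 a_2 - a_2 - a_1 + 1)(N_1 - N_2)}{N_1\,(a_1 a_2 - a_2 + a_1 - a_1^2)} + N_2 \log\frac{N_2\,(-a_1 a_2 +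 a_1 - a_2 + a_2^2)}{(a_1 a_2 - a_2 - a_1 + 1)(N_1 - N_2)},$$ where all the arguments of the logarithms are strictly positive (note $a_1 a_2 - a_2 - a_1 + 1 = (a_1-1)(a_2-1)$, $a_1 a_2 - a_2 + a_1 - a_1^2 = (a_1-1)(a_2-a_1)$, and $-a_1 a_2 + a_1 - a_2 + a_2^2 = (a_2-1)(a_2-a_1)$). -/
/-- In the interior regime
`(a1-1)/(a2-1) < N2/N1 < a2(a1-1)/(a1(a2-1))`, the value of the converse bound
at the maximizer `τ1*` equals the closed-form expression `E*_{l,min}`, the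
arguments of the logarithms being strictly positive. -/
theorem converse_value_at_maximizer
    (N1 N2 a1 a2 : ℝ) (h12 : N2 < N1) (h2 : 0 < N2)
    (ha1 : 1 < a1) (ha12 : a1 < a2)
    (hcond1 : (a1 - 1) / (a2 - 1) < N2 / N1)
    (hcond2 : N2 / N1 < a2 * (a1 - 1) / (a1 * (a2 - 1)))
    (g : ℝ → ℝ)
    (hg : ∀ τ : ℝ, g τ = N1 * Real.log ((1 + τ) / (1 / a1 + τ)) +
      N2 * Real.log (a2 * (1 / a2 + τ) / (1 + τ)))
    (τs : ℝ)
    (hτs : τs = (N1 * (1 / a1 - 1) * (1 / a2) - N2 * (1 / a2 - 1) * (1 / a1)) /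
      (N1 * (1 - 1 / a1) - N2 * (1 - 1 / a2))) :
    0 < a1 * (a1 * a2 - a2 - a1 + 1) * (N1 - N2) /
      (N1 * (a1 * a2 - a2 + a1 - a1 ^ 2)) ∧
    0 < N2 * (-(a1 * a2) + a1 - a2 + a2 ^ 2) /
      ((a1 * a2 - a2 - a1 + 1) * (N1 - N2)) ∧
    g τs =
      N1 * Real.log (a1 * (a1 * a2 - a2 - a1 + 1) * (N1 - N2) /
        (N1 * (a1 * a2 - a2 + a1 - a1 ^ 2))) +
      N2 * Real.log (N2 * (-(a1 * a2) + a1 - a2 + a2 ^ 2) /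
        ((a1 * a2 - a2 - a1 + 1) * (N1 - N2))) := by
  have hN1 : (0:ℝ) < N1 := h2.trans h12
  have ha1p : (0:ℝ) < a1 := by linarith
  have ha2p : (0:ℝ) < a2 := by linarith
  have ha1' : (0:ℝ) < a1 - 1 := by linarith
  have ha2' : (0:ℝ) < a2 - 1 := by linarith
  have hda : (0:ℝ) < a2 - a1 := by linarith
  have hdN : (0:ℝ) < N1 - N2 := by linarith
  -- cross-multiplied conditions
  have hc2 : N2 * (a1 * (a2 - 1)) < a2 * (a1 - 1) * N1 := by
    rw [div_lt_div_iff₀ hN1 (by positivity)] at hcond2; linarith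
  have hc1 : (a1 - 1) * N1 < N2 * (a2 - 1) := by
    rw [div_lt_div_iff₀ ha2' hN1] at hcond1; linarith
  -- key denominator E
  set E : ℝ := N1 * (a1 - 1) * a2 - N2 * (a2 - 1) * a1 with hEdef
  have hE : 0 < E := by rw [hEdef]; nlinarith
  have hD : 0 < N1 * (1 - 1 / a1) - N2 * (1 - 1 / a2) := by
    have h : N1 * (1 - 1 / a1) - N2 * (1 - 1 / a2) = E / (a1 * a2) := by
      rw [hEdef]; field_simp
    rw [h]; positivity
  have hτE : τs = (N2 * (a2 - 1) - N1 * (a1 - 1)) / E := by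
    rw [hτs, div_eq_div_iff hD.ne' hE.ne', hEdef]
    field_simp
    ring
  have h1τ : 1 + τs = (a1 - 1) * (a2 - 1) * (N1 - N2) / E := by
    rw [hτE, eq_div_iff hE.ne', add_mul, div_mul_cancel₀ _ hE.ne', hEdef]
    ring
  have h1a : 1 / a1 + τs = N1 * (a1 - 1) * (a2 - a1) / (a1 * E) := by
    rw [hτE, div_add_div _ _ ha1p.ne' hE.ne', div_eq_div_iff (by positivity) (by positivity),
      hEdef]
    ring
  have h2a : 1 / a2 + τs = N2 * (a2 - 1) * (a2 - a1) / (a2 * E) := by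
    rw [hτE, div_add_div _ _ ha2p.ne' hE.ne', div_eq_div_iff (by positivity) (by positivity),
      hEdef]
    ring
  -- the two log arguments
  have hfac1 : a1 * a2 - a2 - a1 + 1 = (a1 - 1) * (a2 - 1) := by ring
  have hfac2 : a1 * a2 - a2 + a1 - a1 ^ 2 = (a1 - 1) * (a2 - a1) := by ring
  have hfac3 : -(a1 * a2) + a1 - a2 + a2 ^ 2 = (a2 - 1) * (a2 - a1) := by ring
  have hpos1 : 0 < a1 * (a1 * a2 - a2 - a1 + 1) * (N1 - N2) /
      (N1 * (a1 * a2 - a2 + a1 - a1 ^ 2)) := by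
    rw [hfac1, hfac2]; positivity
  have hpos2 : 0 < N2 * (-(a1 * a2) + a1 - a2 + a2 ^ 2) /
      ((a1 * a2 - a2 - a1 + 1) * (N1 - N2)) := by
    rw [hfac3, hfac1]; positivity
  refine ⟨hpos1, hpos2, ?_⟩
  rw [hg]
  have harg1 : (1 + τs) / (1 / a1 + τs) =
      a1 * (a1 * a2 - a2 - a1 + 1) * (N1 - N2) / (N1 * (a1 * a2 - a2 + a1 - a1 ^ 2)) := by
    rw [h1τ, h1a, hfac1, hfac2]
    field_simp
  have harg2 : a2 * (1 / a2 + τs) / (1 + τs) =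
      N2 * (-(a1 * a2) + a1 - a2 + a2 ^ 2) / ((a1 * a2 - a2 - a1 + 1) * (N1 - N2)) := by
    rw [h2a, h1τ, hfac3, hfac1]
    field_simp
  rw [harg1, harg2]
end
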